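/- arXiv:2109.01890 — 6 statements merged into one kernel-verified Lean document; each statement's English description precedes it below -/
import Mathlib

section
/- Let M be a real vector space, n ≥ 1 and k ≥ 0 integers, and γ_1, …, γ_n linear endomorphisms of M satisfying γ_a ∘ γ_b + γ_b ∘ γ_a = −2·δ_{ab}·id. Let Φ : (Fin n)^k → M be Clifford-trace-free in every slot, i.e. for every i ∈ {1,…,k} and every multi-index a = (a_1,…,a_k): ∑_{ν=1}^n γ_ν(Φ(a with its i-th entry replaced by ν)) = 0. Define R_{κνλμ} = δ_{κλ}δ_{νμ} − δ_{κμ}δ_{νλ} (the curvature of the unit sphere) and W_{st} = −(1/4)∑_{κ,ν} R_{κνst}·γ_κ ∘ γ_ν. Then for every multi-index a = (a_1,…,a_k): ∑_{s,t=1}^n (γ_s ∘ γ_t)( W_{st}(Φ(a)) − ∑_{i=1}^k ∑_{ν=1}^n (δ_{νs}δ_{a_i t} − δ_{νt}δ_{a_i s})·Φ(a with i-th entry replaced by ν) ) = (n(n−1)/2 + 2k)·Φ(a). Consequently the zeroth-order (curvature) term (1/2)γ^s γ^t ℛ_{st} in the Lichnerowicz-type formula ∂̸² = ∇*∇ + n(n−1)/4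 + k on Clifford-trace-free spinor k-tensors over S^n equals n(n−1)/4 + k. -/
open Finset

/-- The curvature term `γ^s γ^t ℛ_{st}` of the Lichnerowicz-type formula on the
unit round sphere, evaluated on a spinor-valued `k`-tensor `Φ` that is
Clifford-trace-free in every slot, equals `(n(n−1)/2 + 2k) Φ`.  Here the
curvature of the unit sphere is `R_{κνλμ} = δ_{κλ}δ_{νμ} − δ_{κμ}δ_{νλ}`, the
spin part acts by `W_{st} = −(1/4) ∑_{κ,ν} R_{κνst} γ_κ ∘ γ_ν`, and each tensor
index is acted on by the Riemann tensor. -/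
theorem clifford_traceFree_tensor_curvature_eval
    (M : Type*) [AddCommGroup M] [Module ℝ M]
    (n k : ℕ) (hn : 1 ≤ n) (γ : Fin n → Module.End ℝ M)
    (hcl : ∀ a b : Fin n,
      γ a * γ b + γ b * γ a = if a = b then (-2 : Module.End ℝ M) else 0)
    (Φ : (Fin k → Fin n) → M)
    (hΦ : ∀ (i : Fin k) (a : Fin k → Fin n),
      ∑ ν : Fin n, γ ν (Φ (Function.update a i ν)) = 0) :
    ∀ a : Fin k → Fin n,
      ∑ s : Fin n, ∑ t : Fin n,
        (γ s * γ t)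
          (((-(1/4 : ℝ)) • ∑ κ : Fin n, ∑ ν : Fin n,
              (((if κ = s then (1:ℝ) else 0) * (if ν = t then (1:ℝ) else 0)
                - (if κ = t then (1:ℝ) else 0) * (if ν = s then (1:ℝ) else 0))
                • (γ κ * γ ν)))
            (Φ a)
          - ∑ i : Fin k, ∑ ν : Fin n,
              (((if ν = s then (1:ℝ) else 0) * (if a i = t then (1:ℝ) else 0)
                - (if ν = t then (1:ℝ) else 0) * (if a i = s then (1:ℝ) else 0)))
                • Φ (Function.update a i ν))
      = ((n : ℝ) * ((n : ℝ) - 1) / 2 + 2 * (k : ℝ)) • Φ a := by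
  intro a
  -- basic Clifford facts
  have hsq : ∀ s : Fin n, γ s * γ s = -1 := by
    intro s
    have h := hcl s s
    simp only [if_pos rfl] at h
    have h2 : (2:ℝ) • (γ s * γ s) = (2:ℝ) • (-1 : Module.End ℝ M) := by
      rw [two_smul, two_smul, h]; norm_num
    exact smul_right_injective _ (by norm_num) h2
  have hanti : ∀ s t : Fin n, s ≠ t → γ s * γ t = -(γ t * γ s) := by
    intro s t hst
    have h := hcl s t
    rw [if_neg hst] at h
    exact eq_neg_of_add_eq_zero_left h
  -- collapse the curvature deltas
  have hA : ∀ s t : Fin n,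
      (∑ κ : Fin n, ∑ ν : Fin n,
        (((if κ = s then (1:ℝ) else 0) * (if ν = t then (1:ℝ) else 0)
          - (if κ = t then (1:ℝ) else 0) * (if ν = s then (1:ℝ) else 0))
          • (γ κ * γ ν))) = γ s * γ t - γ t * γ s := by
    intro s t
    simp [sub_smul, Finset.sum_sub_distrib, ite_mul, one_mul, zero_mul, ite_smul, zero_smul,
      Finset.sum_ite_eq, Finset.sum_ite_eq']
  -- pointwise value of the spin (curvature) part
  have hterm : ∀ s t : Fin n,
      (γ s * γ t) (((-(1/4 : ℝ)) • (γ s * γ t - γ t * γ s)) (Φ a))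
        = if s = t then 0 else (1/2:ℝ) • Φ a := by
    intro s t
    have : (γ s * γ t) * ((-(1/4 : ℝ)) • (γ s * γ t - γ t * γ s))
        = if s = t then 0 else (1/2:ℝ) • 1 := by
      by_cases hst : s = t
      · subst hst
        simp [hsq]
      · rw [if_neg hst]
        rw [mul_smul_comm, mul_sub]
        have h1 : γ s * γ t * (γ s * γ t) = -1 := by
          rw [show γ s * γ t * (γ s * γ t) = γ s * (γ t * γ s) * γ t by noncomm_ring,
            hanti t s (Ne.symm hst)]
          simp only [mul_neg, neg_mul]
          rw [show γ s * (γ s * γ t) * γ t = (γ s * γ s) * (γ t * γ t) by noncomm_ring, hsq, hsq]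
          norm_num
        have h2 : γ s * γ t * (γ t * γ s) = 1 := by
          rw [show γ s * γ t * (γ t * γ s) = γ s * (γ t * γ t) * γ s by noncomm_ring, hsq]
          simp only [mul_neg, mul_one, neg_mul]
          rw [hsq]; norm_num
        rw [h1, h2]
        module
    calc (γ s * γ t) (((-(1/4 : ℝ)) • (γ s * γ t - γ t * γ s)) (Φ a))
        = ((γ s * γ t) * ((-(1/4 : ℝ)) • (γ s * γ t - γ t * γ s))) (Φ a) := rfl
      _ = _ := by rw [this]; by_cases hst : s = t <;> simp [hst]
  -- collapse the tensor deltas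
  have hB : ∀ s t : Fin n, ∀ i : Fin k,
      (∑ ν : Fin n,
        (((if ν = s then (1:ℝ) else 0) * (if a i = t then (1:ℝ) else 0)
          - (if ν = t then (1:ℝ) else 0) * (if a i = s then (1:ℝ) else 0)))
          • Φ (Function.update a i ν))
      = (if a i = t then (1:ℝ) else 0) • Φ (Function.update a i s)
        - (if a i = s then (1:ℝ) else 0) • Φ (Function.update a i t) := by
    intro s t i
    simp [sub_smul, Finset.sum_sub_distrib, ite_mul, one_mul, zero_mul, ite_smul, zero_smul,
      Finset.sum_ite_eq, Finset.sum_ite_eq', mul_ite, mul_one, mul_zero]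
  simp only [hA, hB]
  simp only [map_sub, Finset.sum_sub_distrib]
  have hPart1 : (∑ s : Fin n, ∑ t : Fin n,
      (γ s * γ t) (((-(1/4 : ℝ)) • (γ s * γ t - γ t * γ s)) (Φ a)))
      = ((n:ℝ) * ((n:ℝ) - 1) / 2) • Φ a := by
    simp only [hterm]
    have h1 : ∀ s : Fin n, (∑ t : Fin n, if s = t then (0:M) else (1/2:ℝ) • Φ a)
        = ((n:ℝ) - 1) • ((1/2:ℝ) • Φ a) := by
      intro s
      rw [Finset.sum_congr rfl (fun t _ => show (if s = t then (0:M) else (1/2:ℝ) • Φ a)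
        = (1/2:ℝ) • Φ a - (if s = t then (1/2:ℝ) • Φ a else 0) by split <;> simp)]
      rw [Finset.sum_sub_distrib, Finset.sum_const, Finset.sum_ite_eq, if_pos (Finset.mem_univ s),
        Finset.card_univ, Fintype.card_fin, ← Nat.cast_smul_eq_nsmul ℝ]
      module
    rw [Finset.sum_congr rfl (fun s _ => h1 s), Finset.sum_const, Finset.card_univ,
      Fintype.card_fin, ← Nat.cast_smul_eq_nsmul ℝ]
    match_scalars
    ring
  rw [hPart1]
  have hz : ∀ i : Fin k, (∑ t : Fin n, (γ (a i) * γ t) (Φ (Function.update a i t))) = 0 := by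
    intro i
    simp only [Module.End.mul_apply, ← map_sum, hΦ i a, map_zero]
  have key1 : ∀ i : Fin k, (∑ s : Fin n, ∑ t : Fin n,
      (γ s * γ t) ((if a i = t then (1:ℝ) else 0) • Φ (Function.update a i s)))
      = (-2:ℝ) • Φ a := by
    intro i
    simp only [ite_smul, one_smul, zero_smul, apply_ite, map_zero, Finset.sum_ite_eq,
      Finset.mem_univ, if_true]
    have hswap : ∀ s : Fin n, (γ s * γ (a i))
        = (if s = a i then ((-2:ℝ) • 1 : Module.End ℝ M) else 0) - γ (a i) * γ s := by
      intro s
      have h := hcl s (a i)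
      have he : (if s = a i then (-2 : Module.End ℝ M) else 0)
          = (if s = a i then ((-2:ℝ) • 1 : Module.End ℝ M) else 0) := by
        split
        · ext m; simp; module
        · rfl
      rw [he] at h
      exact eq_sub_of_add_eq h
    rw [Finset.sum_congr rfl (fun s _ => show (γ s * γ (a i)) (Φ (Function.update a i s))
      = (if s = a i then (-2:ℝ) • Φ (Function.update a i s) else 0)
        - (γ (a i)) ((γ s) (Φ (Function.update a i s))) by
        rw [hswap s, LinearMap.sub_apply]
        split_ifs <;> simp [Module.End.mul_apply])]
    rw [Finset.sum_sub_distrib, Finset.sum_ite_eq', if_pos (Finset.mem_univ (a i)),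
      ← map_sum, hΦ i a, map_zero, sub_zero, Function.update_eq_self]
  have key2 : ∀ i : Fin k, (∑ s : Fin n, ∑ t : Fin n,
      (γ s * γ t) ((if a i = s then (1:ℝ) else 0) • Φ (Function.update a i t)))
      = 0 := by
    intro i
    simp only [ite_smul, one_smul, zero_smul, apply_ite, map_zero, Finset.sum_ite_irrel,
      Finset.sum_const_zero, Finset.sum_ite_eq, Finset.mem_univ, if_true]
    exact hz i
  have hswapsum : ∀ (F : Fin n → Fin n → Fin k → M),
      (∑ s : Fin n, ∑ t : Fin n, ∑ i : Fin k, F s t i)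
        = ∑ i : Fin k, ∑ s : Fin n, ∑ t : Fin n, F s t i := by
    intro F
    rw [Finset.sum_congr rfl (fun s _ => Finset.sum_comm), Finset.sum_comm]
  have hT1 : (∑ s : Fin n, ∑ t : Fin n, (γ s * γ t)
      (∑ i : Fin k, (if a i = t then (1:ℝ) else 0) • Φ (Function.update a i s)))
      = (2 * (k:ℝ)) • (-(Φ a)) := by
    simp only [map_sum]
    rw [hswapsum, Finset.sum_congr rfl (fun i _ => key1 i), Finset.sum_const,
      Finset.card_univ, Fintype.card_fin, ← Nat.cast_smul_eq_nsmul ℝ]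
    match_scalars
    ring
  have hT2 : (∑ s : Fin n, ∑ t : Fin n, (γ s * γ t)
      (∑ i : Fin k, (if a i = s then (1:ℝ) else 0) • Φ (Function.update a i t)))
      = 0 := by
    simp only [map_sum]
    rw [hswapsum, Finset.sum_congr rfl (fun i _ => key2 i), Finset.sum_const, smul_zero]
  rw [hT1, hT2, sub_zero]
  match_scalars
  ring
end

section
/- Fix an odd integer n ≥ 1 and a real number r with |r| < (n+1)/2. A function Z : {−1,1} × ℕ → ℝ satisfies all of: (i) Z(1, 0) = 1; (ii) (n/2 + j + 1/2 − r)·Z(ε, j+1) = (n/2 + j + 1/2 + r)·Z(ε, j) for all ε, j; (iii) Z(−ε, j) = −Z(ε, j) for all ε, j; if and only if Z(ε, j) = ε·( Γ(n/2 + j + 1/2 + r)·Γ(n/2 + 1/2 − r) ) / ( Γ(n/2 + j + 1/2 − r)·Γ(n/2 + 1/2 + r) ) for all ε, j, where Γ is the real Gamma function. -/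
/-- The unique spectral function of an order-`2r` intertwinor on the spinor
bundle over the round sphere `S^n`, `n` odd: a function `Z` on `{−1,1} × ℕ`
satisfies the normalization `Z(1,0) = 1`, the spectrum-generating transition
relation, and oddness in `ε`, if and only if
`Z(ε,j) = ε Γ(n/2+j+1/2+r) Γ(n/2+1/2−r) / (Γ(n/2+j+1/2−r) Γ(n/2+1/2+r))`. -/
theorem spinor_spectral_function_odd (n : ℕ) (hodd : Odd n) (hn : 1 ≤ n)
    (r : ℝ) (hr : |r| < ((n : ℝ) + 1) / 2) (Z : ℤ → ℕ → ℝ) :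
    (Z 1 0 = 1
      ∧ (∀ ε : ℤ, (ε = 1 ∨ ε = -1) → ∀ j : ℕ,
          ((n : ℝ) / 2 + j + 1 / 2 - r) * Z ε (j + 1)
            = ((n : ℝ) / 2 + j + 1 / 2 + r) * Z ε j)
      ∧ (∀ ε : ℤ, (ε = 1 ∨ ε = -1) → ∀ j : ℕ, Z (-ε) j = - Z ε j))
    ↔ (∀ ε : ℤ, (ε = 1 ∨ ε = -1) → ∀ j : ℕ,
        Z ε j = (ε : ℝ)
          * (Real.Gamma ((n : ℝ) / 2 + j + 1 / 2 + r)
              * Real.Gamma ((n : ℝ) / 2 + 1 / 2 - r))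
          / (Real.Gamma ((n : ℝ) / 2 + j + 1 / 2 - r)
              * Real.Gamma ((n : ℝ) / 2 + 1 / 2 + r))) := by
  have hx := abs_lt.mp hr
  obtain ⟨x, hxdef⟩ : ∃ x : ℝ, x = (n : ℝ) / 2 + 1 / 2 := ⟨_, rfl⟩
  have hxe : x = ((n : ℝ) + 1) / 2 := by rw [hxdef]; ring
  have hp : ∀ j : ℕ, 0 < x + j + r := by
    intro j
    have hj : (0:ℝ) ≤ (j:ℝ) := Nat.cast_nonneg j
    rw [hxe]; linarith [hx.1]
  have hm : ∀ j : ℕ, 0 < x + j - r := by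
    intro j
    have hj : (0:ℝ) ≤ (j:ℝ) := Nat.cast_nonneg j
    rw [hxe]; linarith [hx.2]
  have hGp : ∀ j : ℕ, 0 < Real.Gamma (x + j + r) := fun j =>
    Real.Gamma_pos_of_pos (hp j)
  have hGm : ∀ j : ℕ, 0 < Real.Gamma (x + j - r) := fun j =>
    Real.Gamma_pos_of_pos (hm j)
  obtain ⟨F, hFdef⟩ : ∃ F : ℕ → ℝ, F = fun j : ℕ =>
      Real.Gamma (x + (j : ℝ) + r) * Real.Gamma (x - r)
        / (Real.Gamma (x + (j : ℝ) - r) * Real.Gamma (x + r)) := ⟨_, rfl⟩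
  have hGp0 : 0 < Real.Gamma (x + r) := by
    have := hGp 0; simpa using this
  have hGm0 : 0 < Real.Gamma (x - r) := by
    have := hGm 0; simpa using this
  have hF0 : F 0 = 1 := by
    rw [hFdef]
    simp only [Nat.cast_zero, add_zero]
    rw [div_eq_one_iff_eq (by positivity)]
    ring
  have hFstep : ∀ j : ℕ, (x + j - r) * F (j + 1) = (x + j + r) * F j := by
    intro j
    have e1 : x + ((j : ℕ) + 1 : ℕ) + r = (x + j + r) + 1 := by push_cast; ring
    have e2 : x + ((j : ℕ) + 1 : ℕ) - r = (x + j - r) + 1 := by push_cast; ring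
    rw [hFdef]
    simp only [e1, e2, Real.Gamma_add_one (ne_of_gt (hp j)),
      Real.Gamma_add_one (ne_of_gt (hm j))]
    rw [← mul_div_assoc, ← mul_div_assoc,
      div_eq_div_iff (ne_of_gt (mul_pos (mul_pos (hm j) (hGm j)) hGp0))
        (ne_of_gt (mul_pos (hGm j) hGp0))]
    ring
  have earg1 : ∀ j : ℕ, (n : ℝ) / 2 + j + 1 / 2 + r = x + j + r := by
    intro j; rw [hxdef]; ring
  have earg2 : ∀ j : ℕ, (n : ℝ) / 2 + j + 1 / 2 - r = x + j - r := by
    intro j; rw [hxdef]; ring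
  have earg3 : (n : ℝ) / 2 + 1 / 2 - r = x - r := by rw [hxdef]
  have earg4 : (n : ℝ) / 2 + 1 / 2 + r = x + r := by rw [hxdef]
  have hRHS : ∀ (ε : ℤ) (j : ℕ),
      (ε : ℝ) * (Real.Gamma ((n : ℝ) / 2 + j + 1 / 2 + r)
          * Real.Gamma ((n : ℝ) / 2 + 1 / 2 - r))
        / (Real.Gamma ((n : ℝ) / 2 + j + 1 / 2 - r)
          * Real.Gamma ((n : ℝ) / 2 + 1 / 2 + r)) = (ε : ℝ) * F j := by
    intro ε j
    rw [earg1, earg2, earg3, earg4, hFdef, mul_div_assoc]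
  constructor
  · rintro ⟨h1, h2, h3⟩ ε hε j
    rw [hRHS]
    have hZ1 : ∀ j : ℕ, Z 1 j = F j := by
      intro j
      induction j with
      | zero => rw [h1, hF0]
      | succ k ih =>
        have h := h2 1 (Or.inl rfl) k
        rw [earg1 k, earg2 k] at h
        have hst := hFstep k
        have hne : x + k - r ≠ 0 := ne_of_gt (hm k)
        apply mul_left_cancel₀ hne
        rw [h, hst, ih]
    rcases hε with h | h
    · subst h; simpa using hZ1 j
    · subst h
      have h31 := h3 1 (Or.inl rfl) j
      norm_num at h31 ⊢
      rw [h31, hZ1 j]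
  · intro h
    refine ⟨?_, ?_, ?_⟩
    · have := h 1 (Or.inl rfl) 0
      rw [hRHS] at this
      simpa [hF0] using this
    · intro ε hε j
      have ha := h ε hε j
      have hb := h ε hε (j + 1)
      rw [hRHS] at ha hb
      rw [ha, hb, earg1, earg2]
      push_cast
      linear_combination (ε : ℝ) * hFstep j
    · intro ε hε j
      rcases hε with h1 | h1 <;> subst h1
      · have ha := h 1 (Or.inl rfl) j
        have hb := h (-1) (Or.inr rfl) j
        rw [hRHS] at ha hb
        rw [ha, hb]; push_cast; ring
      · have ha := h 1 (Or.inl rfl) j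
        have hb := h (-1) (Or.inr rfl) j
        rw [hRHS] at ha hb
        norm_num
        rw [ha, hb]; push_cast; ring
end

section
/- Fix an odd integer n ≥ 3, an integer k with 1 ≤ k ≤ (n−1)/2, and a real number r with |r| < (n+3)/2 and n − 2k + 1 + 2r ≠ 0. Write J_j = n/2 + 1 + j. A function Z : {−1,1} × ℕ × {0,1} → ℝ satisfies all of: (i) Z(1, 0, 1) = 1; (ii) (J_j + 1/2 − r)·Z(ε, j+1, q) = (J_j + 1/2 + r)·Z(ε, j, q) for all ε, j, q; (iii) (n − 2k + 1 + 2r)·Z(ε, j, 0) = (n − 2k + 1 − 2r)·Z(ε, j, 1) for all ε, j; (iv) Z(−ε, j, q) = −Z(ε, j, q) for all ε, j, q; if and only if Z(ε, j, q) = ε·( (n − 2k + 1 + 2(2q−1)r) / (n − 2k + 1 + 2r) )·( Γ(J_j + 1/2 + r)·Γ(n/2 + 3/2 − r) ) / ( Γ(J_j + 1/2 − r)·Γ(n/2 + 3/2 + r) ) for all ε, j, q, where Γ is the real Gamma function. -/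
set_option maxHeartbeats 1000000 in
/-- The unique spectral function of an order-`2r` intertwinor on
Clifford-trace-free spinor-valued `k`-forms over the round sphere `S^n`,
`n` odd, `1 ≤ k ≤ (n−1)/2`: with `J_j = n/2 + 1 + j`, a function `Z` on
`{−1,1} × ℕ × {0,1}` satisfies the normalization `Z(1,0,1) = 1`, the
spectrum-generating transition relations, and oddness in `ε`, if and only if
`Z(ε,j,q) = ε ((n−2k+1+2(2q−1)r)/(n−2k+1+2r))
  · Γ(J_j+1/2+r) Γ(n/2+3/2−r) / (Γ(J_j+1/2−r) Γ(n/2+3/2+r))`. -/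
theorem spinorForm_spectral_function_odd (n k : ℕ) (hodd : Odd n) (hn : 3 ≤ n)
    (hk1 : 1 ≤ k) (hk2 : 2 * k + 1 ≤ n) (r : ℝ) (hr : |r| < ((n : ℝ) + 3) / 2)
    (hden : (n : ℝ) - 2 * k + 1 + 2 * r ≠ 0) (Z : ℤ → ℕ → ℕ → ℝ) :
    (Z 1 0 1 = 1
      ∧ (∀ ε : ℤ, (ε = 1 ∨ ε = -1) → ∀ j : ℕ, ∀ q ≤ 1,
          (((n : ℝ) / 2 + 1 + j) + 1 / 2 - r) * Z ε (j + 1) q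
            = (((n : ℝ) / 2 + 1 + j) + 1 / 2 + r) * Z ε j q)
      ∧ (∀ ε : ℤ, (ε = 1 ∨ ε = -1) → ∀ j : ℕ,
          ((n : ℝ) - 2 * k + 1 + 2 * r) * Z ε j 0
            = ((n : ℝ) - 2 * k + 1 - 2 * r) * Z ε j 1)
      ∧ (∀ ε : ℤ, (ε = 1 ∨ ε = -1) → ∀ j : ℕ, ∀ q ≤ 1,
          Z (-ε) j q = - Z ε j q))
    ↔ (∀ ε : ℤ, (ε = 1 ∨ ε = -1) → ∀ j : ℕ, ∀ q ≤ 1,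
        Z ε j q = (ε : ℝ)
          * (((n : ℝ) - 2 * k + 1 + 2 * (2 * (q : ℝ) - 1) * r)
              / ((n : ℝ) - 2 * k + 1 + 2 * r))
          * (Real.Gamma (((n : ℝ) / 2 + 1 + j) + 1 / 2 + r)
              * Real.Gamma ((n : ℝ) / 2 + 3 / 2 - r))
          / (Real.Gamma (((n : ℝ) / 2 + 1 + j) + 1 / 2 - r)
              * Real.Gamma ((n : ℝ) / 2 + 3 / 2 + r))) := by
  have hr' := abs_lt.mp hr
  have hx : ∀ j : ℕ, (0:ℝ) < ((n : ℝ) / 2 + 1 + j) + 1 / 2 + r := by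
    intro j
    have hj : (0:ℝ) ≤ j := Nat.cast_nonneg j
    have := hr'.1
    linarith
  have hy : ∀ j : ℕ, (0:ℝ) < ((n : ℝ) / 2 + 1 + j) + 1 / 2 - r := by
    intro j
    have hj : (0:ℝ) ≤ j := Nat.cast_nonneg j
    have := hr'.2
    linarith
  have hb1 : (0:ℝ) < (n : ℝ) / 2 + 3 / 2 - r := by have := hr'.2; linarith
  have hb2 : (0:ℝ) < (n : ℝ) / 2 + 3 / 2 + r := by have := hr'.1; linarith
  have Gx : ∀ j : ℕ, Real.Gamma (((n : ℝ) / 2 + 1 + j) + 1 / 2 + r) ≠ 0 :=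
    fun j => (Real.Gamma_pos_of_pos (hx j)).ne'
  have Gy : ∀ j : ℕ, Real.Gamma (((n : ℝ) / 2 + 1 + j) + 1 / 2 - r) ≠ 0 :=
    fun j => (Real.Gamma_pos_of_pos (hy j)).ne'
  have Gb1 : Real.Gamma ((n : ℝ) / 2 + 3 / 2 - r) ≠ 0 := (Real.Gamma_pos_of_pos hb1).ne'
  have Gb2 : Real.Gamma ((n : ℝ) / 2 + 3 / 2 + r) ≠ 0 := (Real.Gamma_pos_of_pos hb2).ne'
  have Grecp : ∀ j : ℕ, Real.Gamma (((n : ℝ) / 2 + 1 + (j + 1 : ℕ)) + 1 / 2 + r)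
      = (((n : ℝ) / 2 + 1 + j) + 1 / 2 + r) * Real.Gamma (((n : ℝ) / 2 + 1 + j) + 1 / 2 + r) := by
    intro j
    rw [show (((n : ℝ) / 2 + 1 + ((j + 1 : ℕ) : ℝ)) + 1 / 2 + r)
        = (((n : ℝ) / 2 + 1 + j) + 1 / 2 + r) + 1 by push_cast; ring,
      Real.Gamma_add_one (hx j).ne']
  have Grecm : ∀ j : ℕ, Real.Gamma (((n : ℝ) / 2 + 1 + (j + 1 : ℕ)) + 1 / 2 - r)
      = (((n : ℝ) / 2 + 1 + j) + 1 / 2 - r) * Real.Gamma (((n : ℝ) / 2 + 1 + j) + 1 / 2 - r) := by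
    intro j
    rw [show (((n : ℝ) / 2 + 1 + ((j + 1 : ℕ) : ℝ)) + 1 / 2 - r)
        = (((n : ℝ) / 2 + 1 + j) + 1 / 2 - r) + 1 by push_cast; ring,
      Real.Gamma_add_one (hy j).ne']
  have h0p : Real.Gamma (((n : ℝ) / 2 + 1 + ((0 : ℕ) : ℝ)) + 1 / 2 + r)
      = Real.Gamma ((n : ℝ) / 2 + 3 / 2 + r) := by congr 1; push_cast; ring
  have h0m : Real.Gamma (((n : ℝ) / 2 + 1 + ((0 : ℕ) : ℝ)) + 1 / 2 - r)
      = Real.Gamma ((n : ℝ) / 2 + 3 / 2 - r) := by congr 1; push_cast; ring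
  -- the candidate spectral function, with `ε = 1` factored out
  set F : ℕ → ℕ → ℝ := fun j q =>
    (((n : ℝ) - 2 * k + 1 + 2 * (2 * (q : ℝ) - 1) * r)
        / ((n : ℝ) - 2 * k + 1 + 2 * r))
      * (Real.Gamma (((n : ℝ) / 2 + 1 + j) + 1 / 2 + r)
          * Real.Gamma ((n : ℝ) / 2 + 3 / 2 - r))
      / (Real.Gamma (((n : ℝ) / 2 + 1 + j) + 1 / 2 - r)
          * Real.Gamma ((n : ℝ) / 2 + 3 / 2 + r)) with hF
  have hFval : ∀ (ε : ℤ) (j q : ℕ),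
      (ε : ℝ)
        * (((n : ℝ) - 2 * k + 1 + 2 * (2 * (q : ℝ) - 1) * r)
            / ((n : ℝ) - 2 * k + 1 + 2 * r))
        * (Real.Gamma (((n : ℝ) / 2 + 1 + j) + 1 / 2 + r)
            * Real.Gamma ((n : ℝ) / 2 + 3 / 2 - r))
        / (Real.Gamma (((n : ℝ) / 2 + 1 + j) + 1 / 2 - r)
            * Real.Gamma ((n : ℝ) / 2 + 3 / 2 + r)) = (ε : ℝ) * F j q := by
    intro ε j q
    simp only [hF]
    ring
  have hF01 : F 0 1 = 1 := by
    simp only [hF]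
    rw [h0p, h0m]
    rw [show ((n : ℝ) - 2 * k + 1 + 2 * (2 * ((1:ℕ):ℝ) - 1) * r)
        = ((n : ℝ) - 2 * k + 1 + 2 * r) by push_cast; ring, div_self hden, one_mul,
      mul_comm (Real.Gamma ((n : ℝ) / 2 + 3 / 2 - r)) (Real.Gamma ((n : ℝ) / 2 + 3 / 2 + r)),
      div_self (mul_ne_zero Gb2 Gb1)]
  have hF00 : F 0 0 = ((n : ℝ) - 2 * k + 1 - 2 * r) / ((n : ℝ) - 2 * k + 1 + 2 * r) := by
    simp only [hF]
    rw [h0p, h0m]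
    rw [show ((n : ℝ) - 2 * k + 1 + 2 * (2 * ((0:ℕ):ℝ) - 1) * r)
        = ((n : ℝ) - 2 * k + 1 - 2 * r) by push_cast; ring, mul_div_assoc,
      mul_comm (Real.Gamma ((n : ℝ) / 2 + 3 / 2 - r)) (Real.Gamma ((n : ℝ) / 2 + 3 / 2 + r)),
      div_self (mul_ne_zero Gb2 Gb1), mul_one]
  have hFstep : ∀ j q : ℕ,
      (((n : ℝ) / 2 + 1 + j) + 1 / 2 - r) * F (j + 1) q
        = (((n : ℝ) / 2 + 1 + j) + 1 / 2 + r) * F j q := by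
    intro j q
    have gen : ∀ a b N d P1 P2 Q1 Q2 : ℝ, b ≠ 0 → Q1 ≠ 0 → Q2 ≠ 0 →
        b * (N / d * (a * P1 * P2) / (b * Q1 * Q2)) = a * (N / d * (P1 * P2) / (Q1 * Q2)) := by
      intro a b N d P1 P2 Q1 Q2 hb hQ1 hQ2
      rw [mul_div_assoc', mul_div_assoc',
        div_eq_div_iff (mul_ne_zero (mul_ne_zero hb hQ1) hQ2) (mul_ne_zero hQ1 hQ2)]
      ring
    simp only [hF]
    rw [Grecp j, Grecm j]
    exact gen _ _ _ _ _ _ _ _ (hy j).ne' (Gy j) Gb2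
  have hFq : ∀ j : ℕ,
      ((n : ℝ) - 2 * k + 1 + 2 * r) * F j 0 = ((n : ℝ) - 2 * k + 1 - 2 * r) * F j 1 := by
    intro j
    simp only [hF]
    rw [show ((n : ℝ) - 2 * k + 1 + 2 * (2 * ((0:ℕ):ℝ) - 1) * r)
        = ((n : ℝ) - 2 * k + 1 - 2 * r) by push_cast; ring,
      show ((n : ℝ) - 2 * k + 1 + 2 * (2 * ((1:ℕ):ℝ) - 1) * r)
        = ((n : ℝ) - 2 * k + 1 + 2 * r) by push_cast; ring]
    ring
  constructor
  · rintro ⟨h1, h2, h3, h4⟩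
    have key : ∀ j q : ℕ, q ≤ 1 → Z 1 j q = F j q := by
      intro j
      induction j with
      | zero =>
        intro q hq
        interval_cases q
        · have h := h3 1 (Or.inl rfl) 0
          rw [h1, mul_one] at h
          rw [hF00, eq_div_iff hden]
          linear_combination h
        · rw [h1, hF01]
      | succ j ih =>
        intro q hq
        have h := h2 1 (Or.inl rfl) j q hq
        rw [ih q hq] at h
        have hs := hFstep j q
        exact mul_left_cancel₀ (hy j).ne' (by linear_combination h - hs)
    intro ε hε j q hq
    rw [hFval ε j q]
    rcases hε with h | h <;> subst h
    · rw [key j q hq]; push_cast; ring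
    · have := h4 1 (Or.inl rfl) j q hq
      rw [this, key j q hq]
      push_cast
      ring
  · intro hZ
    have hZ' : ∀ ε : ℤ, (ε = 1 ∨ ε = -1) → ∀ j : ℕ, ∀ q ≤ 1, Z ε j q = (ε : ℝ) * F j q := by
      intro ε hε j q hq
      rw [hZ ε hε j q hq, hFval ε j q]
    refine ⟨?_, ?_, ?_, ?_⟩
    · rw [hZ' 1 (Or.inl rfl) 0 1 le_rfl, hF01]
      norm_num
    · intro ε hε j q hq
      rw [hZ' ε hε (j + 1) q hq, hZ' ε hε j q hq]
      linear_combination (ε : ℝ) * hFstep j q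
    · intro ε hε j
      rw [hZ' ε hε j 0 (by norm_num), hZ' ε hε j 1 le_rfl]
      linear_combination (ε : ℝ) * hFq j
    · intro ε hε j q hq
      have hε' : -ε = 1 ∨ -ε = -1 := by rcases hε with h | h <;> subst h <;> simp
      rw [hZ' (-ε) hε' j q hq, hZ' ε hε j q hq]
      push_cast
      ring
end

section
/- Fix an even integer n ≥ 2 and a real number r with |r| < (n+1)/2. A function Z : ℕ → ℝ satisfies both: (i) Z(0) = 1; (ii) (n/2 + j + 1/2 − r)·Z(j+1) = (n/2 + j + 1/2 + r)·Z(j) for all j; if and only if Z(j) = ( Γ(n/2 + j + 1/2 + r)·Γ(n/2 + 1/2 − r) ) / ( Γ(n/2 + j + 1/2 − r)·Γ(n/2 + 1/2 + r) ) for all j, where Γ is the real Gamma function. -/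
/-- The unique spectral function of the chirality-exchanged order-`2r`
intertwinor `EA` on the half-spinor bundles over the round sphere `S^n`,
`n` even: a function `Z : ℕ → ℝ` satisfies the normalization `Z(0) = 1` and
the spectrum-generating transition relation if and only if
`Z(j) = Γ(n/2+j+1/2+r) Γ(n/2+1/2−r) / (Γ(n/2+j+1/2−r) Γ(n/2+1/2+r))`. -/
theorem spinor_spectral_function_even (n : ℕ) (heven : Even n) (hn : 2 ≤ n)
    (r : ℝ) (hr : |r| < ((n : ℝ) + 1) / 2) (Z : ℕ → ℝ) :
    (Z 0 = 1
      ∧ (∀ j : ℕ,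
          ((n : ℝ) / 2 + j + 1 / 2 - r) * Z (j + 1)
            = ((n : ℝ) / 2 + j + 1 / 2 + r) * Z j))
    ↔ (∀ j : ℕ,
        Z j = (Real.Gamma ((n : ℝ) / 2 + j + 1 / 2 + r)
            * Real.Gamma ((n : ℝ) / 2 + 1 / 2 - r))
          / (Real.Gamma ((n : ℝ) / 2 + j + 1 / 2 - r)
            * Real.Gamma ((n : ℝ) / 2 + 1 / 2 + r))) := by
  obtain ⟨hr1, hr2⟩ := abs_lt.mp hr
  have hp : ∀ j : ℕ, (0:ℝ) < (n : ℝ) / 2 + j + 1 / 2 + r := by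
    intro j
    have : (0:ℝ) ≤ (j : ℝ) := Nat.cast_nonneg j
    linarith
  have hm : ∀ j : ℕ, (0:ℝ) < (n : ℝ) / 2 + j + 1 / 2 - r := by
    intro j
    have : (0:ℝ) ≤ (j : ℝ) := Nat.cast_nonneg j
    linarith
  have hGp : ∀ j : ℕ, 0 < Real.Gamma ((n : ℝ) / 2 + j + 1 / 2 + r) :=
    fun j => Real.Gamma_pos_of_pos (hp j)
  have hGm : ∀ j : ℕ, 0 < Real.Gamma ((n : ℝ) / 2 + j + 1 / 2 - r) :=
    fun j => Real.Gamma_pos_of_pos (hm j)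
  have hG0p : 0 < Real.Gamma ((n : ℝ) / 2 + 1 / 2 + r) :=
    Real.Gamma_pos_of_pos (by linarith)
  have hG0m : 0 < Real.Gamma ((n : ℝ) / 2 + 1 / 2 - r) :=
    Real.Gamma_pos_of_pos (by linarith)
  have e1 : ((n:ℝ) / 2 + ((0:ℕ):ℝ) + 1 / 2 + r) = (n:ℝ) / 2 + 1 / 2 + r := by
    push_cast; ring
  have e2 : ((n:ℝ) / 2 + ((0:ℕ):ℝ) + 1 / 2 - r) = (n:ℝ) / 2 + 1 / 2 - r := by
    push_cast; ring
  have hstepp : ∀ j : ℕ, Real.Gamma ((n : ℝ) / 2 + (j+1 : ℕ) + 1 / 2 + r)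
      = ((n : ℝ) / 2 + j + 1 / 2 + r) * Real.Gamma ((n : ℝ) / 2 + j + 1 / 2 + r) := by
    intro j
    have h : ((n : ℝ) / 2 + (j+1 : ℕ) + 1 / 2 + r) = ((n : ℝ) / 2 + j + 1 / 2 + r) + 1 := by
      push_cast; ring
    rw [h, Real.Gamma_add_one (ne_of_gt (hp j))]
  have hstepm : ∀ j : ℕ, Real.Gamma ((n : ℝ) / 2 + (j+1 : ℕ) + 1 / 2 - r)
      = ((n : ℝ) / 2 + j + 1 / 2 - r) * Real.Gamma ((n : ℝ) / 2 + j + 1 / 2 - r) := by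
    intro j
    have h : ((n : ℝ) / 2 + (j+1 : ℕ) + 1 / 2 - r) = ((n : ℝ) / 2 + j + 1 / 2 - r) + 1 := by
      push_cast; ring
    rw [h, Real.Gamma_add_one (ne_of_gt (hm j))]
  constructor
  · rintro ⟨h0, hrec⟩ j
    induction j with
    | zero =>
      rw [h0, e1, e2, eq_comm, div_eq_one_iff_eq (mul_ne_zero hG0m.ne' hG0p.ne')]
      ring
    | succ j ih =>
      have ih' : Z j * (Real.Gamma ((n : ℝ) / 2 + j + 1 / 2 - r)
          * Real.Gamma ((n : ℝ) / 2 + 1 / 2 + r))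
          = Real.Gamma ((n : ℝ) / 2 + j + 1 / 2 + r)
            * Real.Gamma ((n : ℝ) / 2 + 1 / 2 - r) := by
        rw [ih, div_mul_cancel₀]
        exact mul_ne_zero (hGm j).ne' hG0p.ne'
      rw [hstepp j, hstepm j,
        eq_div_iff (mul_ne_zero (mul_ne_zero (hm j).ne' (hGm j).ne') hG0p.ne')]
      linear_combination (Real.Gamma ((n : ℝ) / 2 + j + 1 / 2 - r)
          * Real.Gamma ((n : ℝ) / 2 + 1 / 2 + r)) * hrec j
        + ((n : ℝ) / 2 + j + 1 / 2 + r) * ih'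
  · intro h
    refine ⟨?_, ?_⟩
    · rw [h 0, e1, e2, div_eq_one_iff_eq (mul_ne_zero hG0m.ne' hG0p.ne')]
      ring
    · intro j
      rw [h j, h (j+1), hstepp j, hstepm j, ← mul_div_assoc, ← mul_div_assoc,
        div_eq_div_iff (mul_ne_zero (mul_ne_zero (hm j).ne' (hGm j).ne') hG0p.ne')
          (mul_ne_zero (hGm j).ne' hG0p.ne')]
      ring
end

section
/- Fix an even integer n ≥ 4, an integer k with 1 ≤ k < n/2, and a real number r with |r| < (n+3)/2 and n − 2k + 1 + 2r ≠ 0. Write J_j = n/2 + 1 + j. A function Z : ℕ × {0,1} → ℝ satisfies all of: (i) Z(0, 1) = 1; (ii) (J_j + 1/2 − r)·Z(j+1, q) = (J_j + 1/2 + r)·Z(j, q) for all j, q; (iii) (n − 2k + 1 + 2r)·Z(j, 0) = (n − 2k + 1 − 2r)·Z(j, 1) for all j; if and only if Z(j, q) = ( (n − 2k + 1 + 2(2q−1)r) / (n − 2k + 1 + 2r) )·( Γ(J_j + 1/2 + r)·Γ(n/2 + 3/2 − r) ) / ( Γ(J_j + 1/2 − r)·Γ(n/2 + 3/2 + r) )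 for all j, q, where Γ is the real Gamma function. -/
noncomputable def Fspec (n : ℕ) (r : ℝ) (j : ℕ) : ℝ :=
  (Real.Gamma (((n : ℝ) / 2 + 1 + j) + 1 / 2 + r)
      * Real.Gamma ((n : ℝ) / 2 + 3 / 2 - r))
    / (Real.Gamma (((n : ℝ) / 2 + 1 + j) + 1 / 2 - r)
      * Real.Gamma ((n : ℝ) / 2 + 3 / 2 + r))

lemma auxdiv (a b c d : ℝ) : a / b * c / d = a * (c / d) / b := by
  rw [div_mul_eq_mul_div, div_div, ← mul_div_assoc, div_div, mul_comm b d]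

/-- The unique spectral function of the chirality-exchanged order-`2r`
intertwinor `EA` on Clifford-trace-free spinor-valued `k`-forms over the
round sphere `S^n`, `n` even, `1 ≤ k < n/2`: with `J_j = n/2 + 1 + j`, a
function `Z` on `ℕ × {0,1}` satisfies the normalization `Z(0,1) = 1` and the
spectrum-generating transition relations if and only if
`Z(j,q) = ((n−2k+1+2(2q−1)r)/(n−2k+1+2r))
  · Γ(J_j+1/2+r) Γ(n/2+3/2−r) / (Γ(J_j+1/2−r) Γ(n/2+3/2+r))`. -/
theorem spinorForm_spectral_function_even (n k : ℕ) (heven : Even n) (hn : 4 ≤ n)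
    (hk1 : 1 ≤ k) (hk2 : 2 * k < n) (r : ℝ) (hr : |r| < ((n : ℝ) + 3) / 2)
    (hden : (n : ℝ) - 2 * k + 1 + 2 * r ≠ 0) (Z : ℕ → ℕ → ℝ) :
    (Z 0 1 = 1
      ∧ (∀ j : ℕ, ∀ q ≤ 1,
          (((n : ℝ) / 2 + 1 + j) + 1 / 2 - r) * Z (j + 1) q
            = (((n : ℝ) / 2 + 1 + j) + 1 / 2 + r) * Z j q)
      ∧ (∀ j : ℕ,
          ((n : ℝ) - 2 * k + 1 + 2 * r) * Z j 0
            = ((n : ℝ) - 2 * k + 1 - 2 * r) * Z j 1))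
    ↔ (∀ j : ℕ, ∀ q ≤ 1,
        Z j q = (((n : ℝ) - 2 * k + 1 + 2 * (2 * (q : ℝ) - 1) * r)
            / ((n : ℝ) - 2 * k + 1 + 2 * r))
          * (Real.Gamma (((n : ℝ) / 2 + 1 + j) + 1 / 2 + r)
              * Real.Gamma ((n : ℝ) / 2 + 3 / 2 - r))
          / (Real.Gamma (((n : ℝ) / 2 + 1 + j) + 1 / 2 - r)
              * Real.Gamma ((n : ℝ) / 2 + 3 / 2 + r))) := by
  obtain ⟨hr1, hr2⟩ := abs_lt.mp hr
  have hxpos : ∀ j : ℕ, (0:ℝ) < ((n : ℝ) / 2 + 1 + j) + 1 / 2 + r := by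
    intro j
    have := Nat.cast_nonneg (α := ℝ) j
    linarith
  have hypos : ∀ j : ℕ, (0:ℝ) < ((n : ℝ) / 2 + 1 + j) + 1 / 2 - r := by
    intro j
    have := Nat.cast_nonneg (α := ℝ) j
    linarith
  have hΓx : ∀ j : ℕ, Real.Gamma (((n : ℝ)/2 + 1 + j) + 1/2 + r) ≠ 0 :=
    fun j => (Real.Gamma_pos_of_pos (hxpos j)).ne'
  have hΓy : ∀ j : ℕ, Real.Gamma (((n : ℝ)/2 + 1 + j) + 1/2 - r) ≠ 0 :=
    fun j => (Real.Gamma_pos_of_pos (hypos j)).ne'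
  have hap : (0:ℝ) < (n:ℝ)/2 + 3/2 + r := by linarith
  have hbp : (0:ℝ) < (n:ℝ)/2 + 3/2 - r := by linarith
  have hΓa : Real.Gamma ((n:ℝ)/2 + 3/2 + r) ≠ 0 := (Real.Gamma_pos_of_pos hap).ne'
  have hΓb : Real.Gamma ((n:ℝ)/2 + 3/2 - r) ≠ 0 := (Real.Gamma_pos_of_pos hbp).ne'
  have hQ : ∀ j : ℕ,
      Real.Gamma (((n : ℝ)/2 + 1 + j) + 1/2 - r) * Real.Gamma ((n:ℝ)/2 + 3/2 + r) ≠ 0 :=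
    fun j => mul_ne_zero (hΓy j) hΓa
  have hF0 : Fspec n r 0 = 1 := by
    unfold Fspec
    rw [show ((n:ℝ)/2 + 1 + ((0:ℕ):ℝ)) + 1/2 + r = (n:ℝ)/2 + 3/2 + r by push_cast; ring,
        show ((n:ℝ)/2 + 1 + ((0:ℕ):ℝ)) + 1/2 - r = (n:ℝ)/2 + 3/2 - r by push_cast; ring,
        mul_comm (Real.Gamma ((n:ℝ)/2 + 3/2 - r)) (Real.Gamma ((n:ℝ)/2 + 3/2 + r))]
    exact div_self (mul_ne_zero hΓa hΓb)
  have hFstep : ∀ j : ℕ,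
      (((n : ℝ)/2 + 1 + j) + 1/2 - r) * Fspec n r (j+1)
        = (((n : ℝ)/2 + 1 + j) + 1/2 + r) * Fspec n r j := by
    intro j
    unfold Fspec
    rw [show ((n:ℝ)/2 + 1 + (((j:ℕ)+1:ℕ):ℝ)) + 1/2 + r = (((n:ℝ)/2 + 1 + j) + 1/2 + r) + 1 by
          push_cast; ring,
        show ((n:ℝ)/2 + 1 + (((j:ℕ)+1:ℕ):ℝ)) + 1/2 - r = (((n:ℝ)/2 + 1 + j) + 1/2 - r) + 1 by
          push_cast; ring,
        Real.Gamma_add_one (hxpos j).ne', Real.Gamma_add_one (hypos j).ne',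
        ← mul_div_assoc, ← mul_div_assoc,
        div_eq_div_iff (mul_ne_zero (mul_ne_zero (hypos j).ne' (hΓy j)) hΓa) (hQ j)]
    ring
  constructor
  · rintro ⟨h0, hii, hiii⟩
    have h1 : ∀ j : ℕ, Z j 1 = Fspec n r j := by
      intro j
      induction j with
      | zero => rw [h0, hF0]
      | succ j ih =>
        have e := hii j 1 le_rfl
        rw [ih] at e
        exact mul_left_cancel₀ (hypos j).ne' (e.trans (hFstep j).symm)
    intro j q hq
    interval_cases q
    · have e := hiii j
      rw [h1 j] at e
      have hz : Z j 0
          = ((n : ℝ) - 2 * k + 1 + 2 * (2 * ((0:ℕ) : ℝ) - 1) * r) * Fspec n r j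
            / ((n : ℝ) - 2 * k + 1 + 2 * r) := by
        rw [eq_div_iff hden]
        push_cast
        linear_combination e
      rw [auxdiv, hz]
      rfl
    · rw [auxdiv, show ((n : ℝ) - 2 * k + 1 + 2 * (2 * ((1:ℕ) : ℝ) - 1) * r)
            = ((n : ℝ) - 2 * k + 1 + 2 * r) by push_cast; ring,
          mul_div_cancel_left₀ _ hden]
      exact h1 j
  · intro hZ
    refine ⟨?_, ?_, ?_⟩
    · rw [hZ 0 1 le_rfl,
          show ((n : ℝ) - 2 * k + 1 + 2 * (2 * ((1:ℕ) : ℝ) - 1) * r)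
            = ((n : ℝ) - 2 * k + 1 + 2 * r) by push_cast; ring,
          div_self hden, one_mul,
          show ((n:ℝ)/2 + 1 + ((0:ℕ):ℝ)) + 1/2 + r = (n:ℝ)/2 + 3/2 + r by push_cast; ring,
          show ((n:ℝ)/2 + 1 + ((0:ℕ):ℝ)) + 1/2 - r = (n:ℝ)/2 + 3/2 - r by push_cast; ring,
          mul_comm (Real.Gamma ((n:ℝ)/2 + 3/2 - r)) (Real.Gamma ((n:ℝ)/2 + 3/2 + r))]
      exact div_self (mul_ne_zero hΓa hΓb)
    · intro j q hq
      rw [hZ (j+1) q hq, hZ j q hq,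
          show ((n:ℝ)/2 + 1 + (((j:ℕ)+1:ℕ):ℝ)) + 1/2 + r = (((n:ℝ)/2 + 1 + j) + 1/2 + r) + 1 by
            push_cast; ring,
          show ((n:ℝ)/2 + 1 + (((j:ℕ)+1:ℕ):ℝ)) + 1/2 - r = (((n:ℝ)/2 + 1 + j) + 1/2 - r) + 1 by
            push_cast; ring,
          Real.Gamma_add_one (hxpos j).ne', Real.Gamma_add_one (hypos j).ne',
          ← mul_div_assoc, ← mul_div_assoc,
          div_eq_div_iff (mul_ne_zero (mul_ne_zero (hypos j).ne' (hΓy j)) hΓa) (hQ j)]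
      ring
    · intro j
      rw [hZ j 0 (by norm_num), hZ j 1 le_rfl, ← mul_div_assoc, ← mul_div_assoc,
          div_eq_div_iff (hQ j) (hQ j)]
      push_cast
      ring
end

section
/- Let k ≥ 1 and l ≥ 0 be integers, m a real number with m ≠ 0, m + 2 ≠ 0, and m + 2 − 2i ≠ 0, m + 2 + 2i ≠ 0 for every integer 1 ≤ i ≤ l, and let J be a real number. With c_i = 16·k·i² / ( (m+2)·(m+2−2i)·(m+2+2i) ) and t₀ = (m+1)·( J² − (m/2 + 1)² ) / ( k·(m+2) ), one has ( m·J/(m+2) ) · ∏_{i=1}^{l} ( (m·J/(m+2))² − i² − c_i·t₀ ) = ( (m − 2l)/(m + 2 + 2l) ) · J · ∏_{i=1}^{l} ( J² − i² ). -/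
open Finset

/-- Eigenvalue of the conformally invariant operator `D_{2l+1,k}` on the
summand `V_ε(j,0)`: with `m = n − 2k`,
`c_i = 16 k i² / ((m+2)(m+2−2i)(m+2+2i))` and
`t₀ = (m+1)(J² − (m/2+1)²)/(k(m+2))`, one has
`(mJ/(m+2)) ∏_{i=1}^{l} ((mJ/(m+2))² − i² − c_i t₀)
  = ((m−2l)/(m+2+2l)) J ∏_{i=1}^{l} (J² − i²)`. -/
theorem eigenvalue_D_odd_order (k l : ℕ) (hk : 1 ≤ k) (m : ℝ) (hm0 : m ≠ 0)
    (hm2 : m + 2 ≠ 0)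
    (h : ∀ i : ℕ, 1 ≤ i → i ≤ l → m + 2 - 2 * i ≠ 0 ∧ m + 2 + 2 * i ≠ 0)
    (J : ℝ) :
    (m * J / (m + 2))
        * ∏ i ∈ Finset.Icc 1 l,
            ((m * J / (m + 2)) ^ 2 - (i : ℝ) ^ 2
              - (16 * (k : ℝ) * (i : ℝ) ^ 2
                  / ((m + 2) * (m + 2 - 2 * i) * (m + 2 + 2 * i)))
                * ((m + 1) * (J ^ 2 - (m / 2 + 1) ^ 2) / ((k : ℝ) * (m + 2))))
      = ((m - 2 * l) / (m + 2 + 2 * l)) * J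
          * ∏ i ∈ Finset.Icc 1 l, (J ^ 2 - (i : ℝ) ^ 2) := by
  have hk0 : (k : ℝ) ≠ 0 := by positivity
  induction l with
  | zero => simp; ring
  | succ l ih =>
    have h' : ∀ i : ℕ, 1 ≤ i → i ≤ l → m + 2 - 2 * i ≠ 0 ∧ m + 2 + 2 * i ≠ 0 :=
      fun i h1 h2 => h i h1 (h2.trans (Nat.le_succ l))
    have hsucc := h (l + 1) (Nat.le_add_left 1 l) le_rfl
    have h1 : m + 2 - 2 * ((l : ℝ) + 1) ≠ 0 := by push_cast at hsucc; exact_mod_cast hsucc.1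
    have h2 : m + 2 + 2 * ((l : ℝ) + 1) ≠ 0 := by push_cast at hsucc; exact_mod_cast hsucc.2
    have h3 : m + 2 + 2 * (l : ℝ) ≠ 0 := by
      rcases Nat.eq_zero_or_pos l with hl | hl
      · subst hl; simpa using hm2
      · have := (h l hl (Nat.le_succ l)).2; push_cast at this; exact this
    rw [Finset.prod_Icc_succ_top (Nat.le_add_left 1 l),
        Finset.prod_Icc_succ_top (Nat.le_add_left 1 l), ← mul_assoc, ih h']
    push_cast
    field_simp
    ring
end
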